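/- Let Q̄*-set be the set of optimal world Q-value functions for tasks in M (tasks sharing the same background MDP). For all tasks M₁, M₂ ∈ M, the optimal world Q-value function of the disjunction task equals the pointwise maximum of the individual optimal world Q-value functions: Q̄*_{M₁ ∨ M₂}(s, g, a) = max{ Q̄*_{M₁}(s, g, a), Q̄*_{M₂}(s, g, a) } for all (s, g, a). (Theorem 5(i), disjunction) -/

import Mathlib

/-!
Formalisation of "World Value Functions" (WVFs).

We model a *task* as a Markov decision process with **deterministic** dynamics:
a transition function `δ : S → A → S`, a set of absorbing states
(`absorbing : S → Prop`; a transition *into* an absorbing state is a terminal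
transition), and a reward function `R s a` giving the reward `R(s, a, s')` of
the deterministic transition `s' = δ s a`.  After a terminal transition the
episode is over: absorbing states are frozen and yield reward `0`.

Values are undiscounted sums of rewards, taken in the extended reals `EReal`
(the return of a policy is the `liminf` of its partial sums of rewards, which
is the genuine sum whenever the episode terminates).
-/

open Filter

open scoped Classical

noncomputable section

/-- A task: a Markov decision process `(S, A, P, R)` with deterministic
transition dynamics. -/
structure DetMDP (S A : Type) where
  /-- the deterministic transition dynamics: `δ s a` is the next state -/
  δ : S → A → S
  /-- absorbing states; a transition into an absorbing state is terminal -/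
  absorbing : S → Prop
  /-- the reward `R s a = R(s, a, δ s a)` -/
  R : S → A → ℝ

namespace DetMDP

variable {S A : Type}

/-- The agent's internal goal space `G ⊆ S`: all states where the agent
experiences a terminal transition. -/
def goalSpace (M : DetMDP S A) : Set S :=
  {s | ∃ a, M.absorbing (M.δ s a)}

/-- The extended reward function
`R̄(s, g, a, s') = r̄_MIN` if `g ≠ s` and `s'` is absorbing, `R(s, a, s')`
otherwise (here `s' = δ s a` is determined by the deterministic dynamics). -/
def extR (M : DetMDP S A) (rmin : ℝ) (s g : S) (a : A) : ℝ :=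
  if g ≠ s ∧ M.absorbing (M.δ s a) then rmin else M.R s a

/-- One step of execution of a (deterministic, stationary) policy `π`;
absorbing states are frozen. -/
def stepTo (M : DetMDP S A) (π : S → A) (s : S) : S :=
  if M.absorbing s then s else M.δ s (π s)

/-- The (deterministic) state trajectory obtained by following `π` from `s`. -/
def traj (M : DetMDP S A) (π : S → A) (s : S) : ℕ → S
  | 0 => s
  | n + 1 => M.stepTo π (M.traj π s n)

/-- The reward (w.r.t. the reward function `r`) collected at time `t`
when following `π` from `s`; it is `0` once the episode has terminated. -/
def rew (M : DetMDP S A) (r : S → A → ℝ) (π : S → A) (s : S) (t : ℕ) : ℝ :=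
  if M.absorbing (M.traj π s t) then 0
  else r (M.traj π s t) (π (M.traj π s t))

/-- The undiscounted return `∑_{t=0}^∞ r_t` collected by `π` from `s`
(as an extended real number). -/
def ret (M : DetMDP S A) (r : S → A → ℝ) (π : S → A) (s : S) : EReal :=
  liminf (fun n => ((∑ t ∈ Finset.range n, M.rew r π s t : ℝ) : EReal)) atTop

/-- The value function `V^π` of a policy for the task. -/
def Vpol (M : DetMDP S A) (π : S → A) (s : S) : EReal :=
  M.ret M.R π s

/-- The action-value function `Q^π` of a policy for the task. -/
def Qpol (M : DetMDP S A) (π : S → A) (s : S) (a : A) : EReal :=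
  if M.absorbing s then 0 else (M.R s a : EReal) + M.ret M.R π (M.δ s a)

/-- The optimal value function `V*` of the task. -/
def Vstar (M : DetMDP S A) (s : S) : EReal :=
  ⨆ π : S → A, M.Vpol π s

/-- The optimal action-value function `Q*(s, a) = max_π Q^π(s, a)` of the task. -/
def Qstar (M : DetMDP S A) (s : S) (a : A) : EReal :=
  ⨆ π : S → A, M.Qpol π s a

/-- The return of the world policy `pibar : S × G → A` for goal `g` from `s`:
the undiscounted sum of extended rewards `R̄(·, g, ·)`. -/
def wRet (M : DetMDP S A) (rmin : ℝ) (pibar : S → S → A) (g s : S) : EReal :=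
  M.ret (fun x b => M.extR rmin x g b) (fun x => pibar x g) s

/-- The world action-value function `Q̄^pibar(s, g, a)` of a world policy. -/
def wQpol (M : DetMDP S A) (rmin : ℝ) (pibar : S → S → A) (s g : S) (a : A) : EReal :=
  if M.absorbing s then 0
  else (M.extR rmin s g a : EReal) + M.wRet rmin pibar g (M.δ s a)

/-- The optimal world action-value function (the WVF)
`Q̄*(s, g, a) = max_pibar Q̄^pibar(s, g, a)`. -/
def wQstar (M : DetMDP S A) (rmin : ℝ) (s g : S) (a : A) : EReal :=
  ⨆ pibar : S → S → A, M.wQpol rmin pibar s g a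

/-- The optimal world value function `V̄*(s, g) = max_a Q̄*(s, g, a)`. -/
def wVstar (M : DetMDP S A) (rmin : ℝ) (s g : S) : EReal :=
  ⨆ a : A, M.wQstar rmin s g a

/-- Following `π` from `s`, the episode terminates with terminal state `g`,
i.e. the terminal transition is experienced at `g` (`s_T = g`). -/
def reaches (M : DetMDP S A) (π : S → A) (s g : S) : Prop :=
  ∃ n, M.traj π s n = g ∧ M.absorbing (M.traj π s (n + 1))

/-- The probability `P^pibar_s(s_T = g)` of reaching goal `g` from `s` under a
world policy `pibar` (it is `0` or `1`, since everything is deterministic). -/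
def reachProb (M : DetMDP S A) (pibar : S → S → A) (s g : S) : ℝ :=
  if M.reaches (fun x => pibar x g) s g then 1 else 0

/-- `g` is reachable from `s`. -/
def reachable (M : DetMDP S A) (s g : S) : Prop :=
  ∃ π : S → A, M.reaches π s g

/-- The penalty `rmin` (`r̄_MIN`) is strictly smaller than the least possible
return of the task. -/
def PenaltyOK (M : DetMDP S A) (rmin : ℝ) : Prop :=
  ∀ (π : S → A) (s : S), (rmin : EReal) < M.ret M.R π s

/-- `τ` is a task-specific reward function over the background MDP `M₀`:
it is non-zero only for transitions entering terminal (absorbing) states. -/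
def IsTaskReward (M₀ : DetMDP S A) (τ : S → A → ℝ) : Prop :=
  ∀ s a, ¬ M₀.absorbing (M₀.δ s a) → τ s a = 0

/-- The task over the background MDP (world) `M₀` specified by a task-specific
reward `τ`: the same state space, action space and dynamics as `M₀`, with
reward function `R_M = R₀ + R_M^τ`. -/
def withTask (M₀ : DetMDP S A) (τ : S → A → ℝ) : DetMDP S A :=
  { δ := M₀.δ, absorbing := M₀.absorbing, R := fun s a => M₀.R s a + τ s a }

/-- `τ` is a task of the world `M₀` whose terminal rewards lie in `[Rlo, Rhi]`. -/
def InWorld (M₀ : DetMDP S A) (Rlo Rhi : ℝ) (τ : S → A → ℝ) : Prop :=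
  M₀.IsTaskReward τ ∧ ∀ s a, M₀.absorbing (M₀.δ s a) → Rlo ≤ τ s a ∧ τ s a ≤ Rhi

/-- The task-specific reward of the maximum task `M_SUP`: terminal reward
`R_MAX` at all goals in `G`. -/
def tauSup (M₀ : DetMDP S A) (Rhi : ℝ) : S → A → ℝ :=
  fun s a => if M₀.absorbing (M₀.δ s a) then Rhi else 0

/-- The task-specific reward of the minimum task `M_INF`: terminal reward
`R_MIN` at all goals in `G`. -/
def tauInf (M₀ : DetMDP S A) (Rlo : ℝ) : S → A → ℝ :=
  fun s a => if M₀.absorbing (M₀.δ s a) then Rlo else 0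

/-- The task-specific reward of the negated task `¬M`:
`R_{¬M} = (R_{M_SUP} + R_{M_INF}) − R_M`. -/
def tauNot (M₀ : DetMDP S A) (Rlo Rhi : ℝ) (τ : S → A → ℝ) : S → A → ℝ :=
  fun s a => M₀.tauSup Rhi s a + M₀.tauInf Rlo s a - τ s a

end DetMDP

/-!
The trajectory of a world policy does not depend on the task, and two tasks of the same world
have the same extended rewards except on terminal transitions, of which a trajectory makes at
most one. So for every world policy the reward sequences of `M₁` and `M₂` are comparable, the
rewards of `M₁ ∨ M₂` are their maximum, and its return is the larger of the two returns. Taking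
the supremum over world policies commutes with `max`.
-/

theorem Set.Subsingleton.le_or_le_of_setOf_ne {ι α : Type*} [LinearOrder α] {f g : ι → α}
    (h : {i | f i ≠ g i}.Subsingleton) : f ≤ g ∨ g ≤ f := by
  refine or_iff_not_imp_left.2 fun hfg j => le_of_not_gt fun hj => ?_
  obtain ⟨i, hi⟩ := not_forall.1 hfg
  have hij : i = j := h (ne_of_gt (not_le.1 hi)) hj.ne
  exact hi (hij ▸ hj.le)

theorem max_add_max_of_eq_or_eq {α : Type*} [LinearOrder α] [AddCommSemigroup α] [AddLeftMono α]
    {a₁ a₂ b₁ b₂ : α} (h : a₁ = a₂ ∨ b₁ = b₂) :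
    max a₁ a₂ + max b₁ b₂ = max (a₁ + b₁) (a₂ + b₂) := by
  rcases h with rfl | rfl
  · rw [max_self, max_add_add_left]
  · rw [max_self, max_add_add_right]

namespace DetMDP

variable {S A : Type}

section Trajectory

variable (M : DetMDP S A) (π : S → A) (s : S)

theorem traj_succ_of_not_absorbing {t : ℕ} (h : ¬ M.absorbing (M.traj π s t)) :
    M.traj π s (t + 1) = M.δ (M.traj π s t) (π (M.traj π s t)) := by
  simp only [traj, stepTo, if_neg h]

theorem absorbing_traj_of_le {m n : ℕ} (hmn : m ≤ n) (h : M.absorbing (M.traj π s m)) :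
    M.absorbing (M.traj π s n) := by
  induction n, hmn using Nat.le_induction with
  | base => exact h
  | succ n _ ih => simpa only [traj, stepTo, if_pos ih] using ih

theorem subsingleton_setOf_terminal :
    {t | ¬ M.absorbing (M.traj π s t) ∧ M.absorbing (M.traj π s (t + 1))}.Subsingleton := by
  intro t ht u hu
  by_contra hne
  rcases Nat.lt_or_gt_of_ne hne with h | h
  · exact hu.1 (M.absorbing_traj_of_le π s h ht.2)
  · exact ht.1 (M.absorbing_traj_of_le π s h hu.2)

theorem rew_eq_of_not_terminal {r₁ r₂ : S → A → ℝ}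
    (hr : ∀ x b, ¬ M.absorbing (M.δ x b) → r₁ x b = r₂ x b) {t : ℕ}
    (ht : ¬ (¬ M.absorbing (M.traj π s t) ∧ M.absorbing (M.traj π s (t + 1)))) :
    M.rew r₁ π s t = M.rew r₂ π s t := by
  unfold rew
  split_ifs with habs
  · rfl
  · rw [M.traj_succ_of_not_absorbing π s habs] at ht
    exact hr _ _ fun h => ht ⟨habs, h⟩

theorem rew_max (r₁ r₂ : S → A → ℝ) (t : ℕ) :
    M.rew (fun x b => max (r₁ x b) (r₂ x b)) π s t = max (M.rew r₁ π s t) (M.rew r₂ π s t) := by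
  unfold rew
  split_ifs <;> simp

theorem ret_of_absorbing (r : S → A → ℝ) (h : M.absorbing s) : M.ret r π s = 0 := by
  have hrew (t : ℕ) : M.rew r π s t = 0 :=
    if_pos (M.absorbing_traj_of_le π s (Nat.zero_le t) h)
  simp [ret, hrew]

theorem ret_mono {r₁ r₂ : S → A → ℝ} (h : ∀ t, M.rew r₁ π s t ≤ M.rew r₂ π s t) :
    M.ret r₁ π s ≤ M.ret r₂ π s :=
  liminf_le_liminf (Eventually.of_forall fun _ =>
    EReal.coe_le_coe_iff.2 (Finset.sum_le_sum fun t _ => h t))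

theorem ret_max_of_rew_le {r₁ r₂ : S → A → ℝ} (h : ∀ t, M.rew r₁ π s t ≤ M.rew r₂ π s t) :
    M.ret (fun x b => max (r₁ x b) (r₂ x b)) π s = max (M.ret r₁ π s) (M.ret r₂ π s) := by
  rw [max_eq_right (M.ret_mono π s h)]
  simp only [ret, rew_max, max_eq_right (h _)]

theorem ret_max {r₁ r₂ : S → A → ℝ} (hr : ∀ x b, ¬ M.absorbing (M.δ x b) → r₁ x b = r₂ x b) :
    M.ret (fun x b => max (r₁ x b) (r₂ x b)) π s = max (M.ret r₁ π s) (M.ret r₂ π s) := by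
  have hne : {t | M.rew r₁ π s t ≠ M.rew r₂ π s t}.Subsingleton :=
    (M.subsingleton_setOf_terminal π s).anti fun t ht =>
      by_contra fun hterm => ht (M.rew_eq_of_not_terminal π s hr hterm)
  rcases hne.le_or_le_of_setOf_ne with h | h
  · exact M.ret_max_of_rew_le π s h
  · simp only [max_comm (r₁ _ _), max_comm (M.ret r₁ π s)]
    exact M.ret_max_of_rew_le π s h

end Trajectory

section Tasks

variable (M₀ : DetMDP S A)

theorem traj_withTask (τ : S → A → ℝ) : (M₀.withTask τ).traj = M₀.traj := by
  funext π s n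
  induction n with
  | zero => rfl
  | succ n ih => simp only [traj, ih]; rfl

theorem ret_withTask (τ : S → A → ℝ) : (M₀.withTask τ).ret = M₀.ret := by
  funext r π s
  simp only [ret, rew, traj_withTask]
  rfl

-- Unfolding `extR` directly leaves `Decidable` instances about `M₀.withTask τ`, which blocks
-- `split_ifs` across different tasks; these restatements have conditions about `M₀` alone.
theorem extR_withTask (τ : S → A → ℝ) (rmin : ℝ) (x g : S) (b : A) :
    (M₀.withTask τ).extR rmin x g b =
      if g ≠ x ∧ M₀.absorbing (M₀.δ x b) then rmin else M₀.R x b + τ x b := rfl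

theorem wQpol_withTask (τ : S → A → ℝ) (rmin : ℝ) (pibar : S → S → A) (s g : S) (a : A) :
    (M₀.withTask τ).wQpol rmin pibar s g a =
      if M₀.absorbing s then 0
      else ((M₀.withTask τ).extR rmin s g a : EReal) + (M₀.withTask τ).wRet rmin pibar g (M₀.δ s a) :=
  rfl

theorem extR_withTask_max (τ₁ τ₂ : S → A → ℝ) (rmin : ℝ) (x g : S) (b : A) :
    (M₀.withTask fun x b => max (τ₁ x b) (τ₂ x b)).extR rmin x g b =
      max ((M₀.withTask τ₁).extR rmin x g b) ((M₀.withTask τ₂).extR rmin x g b) := by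
  simp only [extR_withTask]
  split_ifs
  · exact (max_self rmin).symm
  · exact (max_add_add_left _ _ _).symm

theorem extR_withTask_of_not_absorbing {τ : S → A → ℝ} (hτ : M₀.IsTaskReward τ) (rmin : ℝ)
    {x : S} (g : S) {b : A} (h : ¬ M₀.absorbing (M₀.δ x b)) :
    (M₀.withTask τ).extR rmin x g b = M₀.R x b := by
  simp [extR_withTask, h, hτ x b h]

variable {M₀} {τ₁ τ₂ : S → A → ℝ}

theorem wRet_withTask_max (h₁ : M₀.IsTaskReward τ₁) (h₂ : M₀.IsTaskReward τ₂) (rmin : ℝ)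
    (pibar : S → S → A) (g s : S) :
    (M₀.withTask fun x b => max (τ₁ x b) (τ₂ x b)).wRet rmin pibar g s =
      max ((M₀.withTask τ₁).wRet rmin pibar g s) ((M₀.withTask τ₂).wRet rmin pibar g s) := by
  simp only [wRet, ret_withTask, extR_withTask_max]
  refine M₀.ret_max _ s fun x b h => ?_
  rw [M₀.extR_withTask_of_not_absorbing h₁ rmin g h, M₀.extR_withTask_of_not_absorbing h₂ rmin g h]

theorem wQpol_withTask_max (h₁ : M₀.IsTaskReward τ₁) (h₂ : M₀.IsTaskReward τ₂) (rmin : ℝ)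
    (pibar : S → S → A) (s g : S) (a : A) :
    (M₀.withTask fun x b => max (τ₁ x b) (τ₂ x b)).wQpol rmin pibar s g a =
      max ((M₀.withTask τ₁).wQpol rmin pibar s g a) ((M₀.withTask τ₂).wQpol rmin pibar s g a) := by
  simp only [wQpol_withTask]
  split_ifs
  · exact (max_self 0).symm
  rw [wRet_withTask_max h₁ h₂, extR_withTask_max,
    (EReal.coe_strictMono.monotone.map_max : _ = max (_ : EReal) _)]
  apply max_add_max_of_eq_or_eq
  by_cases hterm : M₀.absorbing (M₀.δ s a)
  · right
    simp only [wRet, ret_withTask, M₀.ret_of_absorbing _ _ _ hterm]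
  · left
    rw [M₀.extR_withTask_of_not_absorbing h₁ rmin g hterm,
      M₀.extR_withTask_of_not_absorbing h₂ rmin g hterm]

end Tasks

theorem wQstar_or_general
    (M₀ : DetMDP S A) (rmin Rlo Rhi : ℝ) (τ₁ τ₂ : S → A → ℝ)
    (h₁ : M₀.InWorld Rlo Rhi τ₁) (h₂ : M₀.InWorld Rlo Rhi τ₂) :
    ∀ (s g : S) (a : A),
      (M₀.withTask (fun s' a' => max (τ₁ s' a') (τ₂ s' a'))).wQstar rmin s g a =
        max ((M₀.withTask τ₁).wQstar rmin s g a) ((M₀.withTask τ₂).wQstar rmin s g a) := by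
  intro s g a
  simp only [wQstar, wQpol_withTask_max h₁.1 h₂.1]
  exact iSup_sup_eq

/-- **Theorem 5(i), disjunction**: for all tasks `M₁, M₂` of the world, the
optimal world `Q`-value function of the disjunction task
(`R_{M₁ ∨ M₂} = max{R_{M₁}, R_{M₂}}`) is the pointwise maximum:
`Q̄*_{M₁ ∨ M₂}(s, g, a) = max{Q̄*_{M₁}(s, g, a), Q̄*_{M₂}(s, g, a)}`
for all `(s, g, a)`. -/
theorem wQstar_or [Fintype S] [Fintype A] [Nonempty A]
    (M₀ : DetMDP S A) (rmin Rlo Rhi : ℝ) (τ₁ τ₂ : S → A → ℝ)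
    (h₁ : M₀.InWorld Rlo Rhi τ₁) (h₂ : M₀.InWorld Rlo Rhi τ₂)
    (hpen : ∀ τ : S → A → ℝ, M₀.InWorld Rlo Rhi τ → (M₀.withTask τ).PenaltyOK rmin) :
    ∀ (s g : S) (a : A),
      (M₀.withTask (fun s' a' => max (τ₁ s' a') (τ₂ s' a'))).wQstar rmin s g a =
        max ((M₀.withTask τ₁).wQstar rmin s g a) ((M₀.withTask τ₂).wQstar rmin s g a) :=
  wQstar_or_general M₀ rmin Rlo Rhi τ₁ τ₂ h₁ h₂

end DetMDP
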